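/- Let u, y be (L+1)-times differentiable and let α be a differentiable solution of H(u^{(i)}) α^{(1)} = 0 and H(y^{(i)}) α^{(1)} = 0 for i = 0,...,L-1. If the jet condition holds at time 0, i.e., H(u^{(i)})(0) α(0) = ū^{(i)}(0) and H(y^{(i)})(0) α(0) = ȳ^{(i)}(0) for i = 0,...,L, where ū := H(u)α and ȳ := H(y)α, then for all i = 0,...,L and all t, H(u^{(i)})(t) α(t) = ū^{(i)}(t) and H(y^{(i)})(t) α(t) = ȳ^{(i)}(t); in particular ū is L-times differentiable with ū^{(i)} = H(u^{(i)})α. -/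

import Mathlib

open Matrix

/-- `Hmat T M w t` is the `q × (M+1)` matrix whose `j`-th column is `w (t + j T)`. -/
noncomputable def Hmat {q : ℕ} (T : ℝ) (M : ℕ) (w : ℝ → Fin q → ℝ) (t : ℝ) :
    Matrix (Fin q) (Fin (M + 1)) ℝ :=
  fun i j => w (t + (j : ℕ) * T) i

lemma hasDerivAt_Hmat_mulVec {q M : ℕ} (T : ℝ) (w w' : ℝ → Fin q → ℝ)
    (hw : ∀ s, HasDerivAt w (w' s) s)
    (α : ℝ → Fin (M + 1) → ℝ) (hα : Differentiable ℝ α) (t : ℝ) :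
    HasDerivAt (fun s => Hmat T M w s *ᵥ α s)
      (Hmat T M w' t *ᵥ α t + Hmat T M w t *ᵥ deriv α t) t := by
  rw [hasDerivAt_pi]
  intro k
  have hwk : ∀ s j : ℝ, HasDerivAt (fun r => w (r + j) k) (w' (s + j) k) s := by
    intro s j
    have h1 : HasDerivAt (fun r : ℝ => r + j) 1 s := (hasDerivAt_id s).add_const j
    have h2 := hasDerivAt_pi.1 (hw (s + j)) k
    simpa [Function.comp_def] using h2.comp s h1
  have hαk : ∀ j, HasDerivAt (fun s => α s j) (deriv α t j) t :=
    fun j => hasDerivAt_pi.1 (hα t).hasDerivAt j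
  have key : HasDerivAt (fun s => ∑ j : Fin (M+1), w (s + (j:ℕ)*T) k * α s j)
      (∑ j : Fin (M+1), (w' (t + (j:ℕ)*T) k * α t j + w (t + (j:ℕ)*T) k * deriv α t j)) t := by
    apply HasDerivAt.fun_sum
    intro j _
    exact (hwk t ((j:ℕ)*T)).mul (hαk j)
  have heq : (fun s => (Hmat T M w s *ᵥ α s) k)
      = fun s => ∑ j : Fin (M+1), w (s + (j:ℕ)*T) k * α s j := by
    funext s; simp [Hmat, Matrix.mulVec, dotProduct]
  rw [heq]
  convert key using 1
  · rfl
  · rfl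
  simp [Hmat, Matrix.mulVec, dotProduct, Finset.sum_add_distrib]

lemma jet_aux {q M L : ℕ} (T : ℝ) (w : ℝ → Fin q → ℝ)
    (hw : ContDiff ℝ (L + 1 : ℕ) w)
    (α : ℝ → Fin (M + 1) → ℝ) (hα : Differentiable ℝ α)
    (hk : ∀ i < L, ∀ t : ℝ, Hmat T M (iteratedDeriv i w) t *ᵥ deriv α t = 0) :
    ∀ i ≤ L, iteratedDeriv i (fun t => Hmat T M w t *ᵥ α t)
      = fun t => Hmat T M (iteratedDeriv i w) t *ᵥ α t := by
  have hder : ∀ i ≤ L, ∀ s : ℝ, HasDerivAt (iteratedDeriv i w) (iteratedDeriv (i+1) w s) s := by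
    intro i hi s
    have hd : Differentiable ℝ (iteratedDeriv i w) := by
      apply hw.differentiable_iteratedDeriv
      exact_mod_cast Nat.lt_succ_of_le hi
    rw [iteratedDeriv_succ]
    exact (hd s).hasDerivAt
  intro i hi
  induction i with
  | zero => simp
  | succ n ih =>
    have hnL : n < L := Nat.lt_of_succ_le hi
    rw [iteratedDeriv_succ, ih hnL.le]
    funext t
    have h := hasDerivAt_Hmat_mulVec T (iteratedDeriv n w) (iteratedDeriv (n+1) w)
      (hder n hnL.le) α hα t
    rw [hk n hnL t, add_zero] at h
    exact h.deriv

/-- the kernel conditions on `α⁽¹⁾` propagate the jet structure: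
`H(u⁽ⁱ⁾)α` is the `i`-th derivative of `ū := H(u)α` (and similarly for `y`). -/
theorem jet_propagation {m p M L : ℕ} (T : ℝ)
    (u : ℝ → Fin m → ℝ) (y : ℝ → Fin p → ℝ)
    (hu : ContDiff ℝ (L + 1 : ℕ) u) (hy : ContDiff ℝ (L + 1 : ℕ) y)
    (α : ℝ → Fin (M + 1) → ℝ) (hα : Differentiable ℝ α)
    (hku : ∀ i < L, ∀ t : ℝ, Hmat T M (iteratedDeriv i u) t *ᵥ deriv α t = 0)
    (hky : ∀ i < L, ∀ t : ℝ, Hmat T M (iteratedDeriv i y) t *ᵥ deriv α t = 0)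
    (ubar : ℝ → Fin m → ℝ) (ybar : ℝ → Fin p → ℝ)
    (hub : ubar = fun t => Hmat T M u t *ᵥ α t)
    (hyb : ybar = fun t => Hmat T M y t *ᵥ α t)
    (hinitu : ∀ i ≤ L, Hmat T M (iteratedDeriv i u) 0 *ᵥ α 0 = iteratedDeriv i ubar 0)
    (hinity : ∀ i ≤ L, Hmat T M (iteratedDeriv i y) 0 *ᵥ α 0 = iteratedDeriv i ybar 0) :
    (∀ i ≤ L, ∀ t : ℝ, Hmat T M (iteratedDeriv i u) t *ᵥ α t = iteratedDeriv i ubar t) ∧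
    (∀ i ≤ L, ∀ t : ℝ, Hmat T M (iteratedDeriv i y) t *ᵥ α t = iteratedDeriv i ybar t) ∧
    ContDiff ℝ (L : ℕ) ubar := by
  have hu' := jet_aux T u hu α hα hku
  have hy' := jet_aux T y hy α hα hky
  subst hub hyb
  refine ⟨fun i hi t => (congrFun (hu' i hi) t).symm,
          fun i hi t => (congrFun (hy' i hi) t).symm, ?_⟩
  apply contDiff_of_differentiable_iteratedDeriv
  intro i hi
  have hi' : i ≤ L := by exact_mod_cast hi
  rw [hu' i hi']
  have hder : ∀ s : ℝ, HasDerivAt (iteratedDeriv i u) (iteratedDeriv (i+1) u s) s := by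
    intro s
    have hd : Differentiable ℝ (iteratedDeriv i u) := by
      apply hu.differentiable_iteratedDeriv
      exact_mod_cast Nat.lt_succ_of_le hi'
    rw [iteratedDeriv_succ]
    exact (hd s).hasDerivAt
  exact fun t => (hasDerivAt_Hmat_mulVec T _ _ hder α hα t).differentiableAt
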